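/- For every real x with 0 < x ≤ π/2, the probability density of distance on L(n;1) converges pointwise to the sine distribution: lim_{n→∞} f_n(x) = sin(2x), where f_n(x) = (2n/π) · sin²(x) for 0 ≤ x ≤ π/n and f_n(x) = (2n/π) · sin(x) · cos(x) · tan(π/n) for π/n < x ≤ π/2. -/

import Mathlib

/-! For fixed `x > 0` the threshold `π / n` eventually drops below `x`, so `f_n(x)` is eventually
`sin (2x) · tan (π/n) / (π/n)`, and `tan t / t → 1` as `t → 0` because `tan' 0 = 1`. -/

/-- The probability density function of distance between two uniform random points
on the homogeneous lens space `L(n;1)`. -/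
noncomputable def pdfF (n : ℕ) (x : ℝ) : ℝ :=
  if x ≤ Real.pi / n then (2 * n / Real.pi) * Real.sin x ^ 2
  else (2 * n / Real.pi) * Real.sin x * Real.cos x * Real.tan (Real.pi / n)

open Filter Topology Real

theorem Real.tendsto_tan_div_self_nhdsNE_zero :
    Tendsto (fun t : ℝ => tan t / t) (𝓝[≠] 0) (𝓝 1) := by
  have hderiv : HasDerivAt tan 1 0 := by
    simpa using Real.hasDerivAt_tan (x := 0) (by simp)
  refine (hasDerivAt_iff_tendsto_slope_zero.mp hderiv).congr fun t => ?_
  simp [div_eq_inv_mul]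

theorem tendsto_const_div_natCast_nhdsNE_zero {c : ℝ} (hc : c ≠ 0) :
    Tendsto (fun n : ℕ => c / n) atTop (𝓝[≠] 0) := by
  refine tendsto_nhdsWithin_iff.mpr ⟨tendsto_const_div_atTop_nhds_zero_nat c, ?_⟩
  filter_upwards [eventually_ne_atTop 0] with n hn
  exact div_ne_zero hc (Nat.cast_ne_zero.mpr hn)

theorem eventually_pi_div_natCast_lt {x : ℝ} (hx : 0 < x) :
    ∀ᶠ n : ℕ in atTop, π / n < x :=
  (tendsto_const_div_atTop_nhds_zero_nat π).eventually (gt_mem_nhds hx)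

theorem pdfF_of_pi_div_lt {n : ℕ} {x : ℝ} (h : π / n < x) :
    pdfF n x = sin (2 * x) * (tan (π / n) / (π / n)) := by
  rw [pdfF, if_neg h.not_ge, sin_two_mul, div_div_eq_mul_div]
  ring

theorem pdf_tendsto_sine_distribution_general (x : ℝ) (hx0 : 0 < x) :
    Filter.Tendsto (fun n : ℕ => pdfF n x) Filter.atTop (nhds (Real.sin (2 * x))) := by
  have hlimit : Tendsto (fun n : ℕ => sin (2 * x) * (tan (π / n) / (π / n))) atTop
      (𝓝 (sin (2 * x))) := by
    simpa using (tendsto_tan_div_self_nhdsNE_zero.comp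
      (tendsto_const_div_natCast_nhdsNE_zero pi_ne_zero)).const_mul (sin (2 * x))
  refine hlimit.congr' ?_
  filter_upwards [eventually_pi_div_natCast_lt hx0] with n hn
  exact (pdfF_of_pi_div_lt hn).symm

theorem pdf_tendsto_sine_distribution (x : ℝ) (hx0 : 0 < x) (hx : x ≤ Real.pi / 2) :
    Filter.Tendsto (fun n : ℕ => pdfF n x) Filter.atTop (nhds (Real.sin (2 * x))) :=
  pdf_tendsto_sine_distribution_general x hx0
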